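/- arXiv:1209.3137 — 6 statements merged into one kernel-verified Lean document; each statement's English description precedes it below -/
import Mathlib

section
/- Let N be a positive integer and s₀, s₁, s₂ positive integers with s₀ + s₁ + s₂ = N. Extend s to indices in ℤ/12 by s_i = s_j whenever i ≡ j (mod 3). If there exist nonnegative integers λ₀,...,λ₁₁ (indexed by ℤ/12) such that for every i ∈ ℤ/12, s_i = λ_{i-3} + λ_{i-2} + λ_{i-1} + λ_i (indices mod 12), then max(s₀, s₁, s₂) ≤ 2·min(s₀, s₁, s₂). -/
/-!
Write `W i = λ_{i-3} + λ_{i-2} + λ_{i-1} + λ_i`, so the hypothesis says `s_i = W i`. The windows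
ending at `i` and at `i + 3` together cover the seven indices `i-3, …, i+3`, hence contain every
window ending at `i + k` for `k ≤ 3`; as the `λ` are nonnegative, `s_{i+k} ≤ s_i + s_{i+3} = 2 s_i`.
Since `i, i+1, i+2, i+3` run through all residues mod 3, each `s_j` is at most twice each `s_i`.
-/

def windowSum {R : Type*} [CommRing R] (lam : R → ℕ) (i : R) : ℕ :=
  lam (i - 3) + lam (i - 2) + lam (i - 1) + lam i

theorem windowSum_add_le_add {R : Type*} [CommRing R] (lam : R → ℕ) (i : R) {k : ℕ}
    (hk : k ≤ 3) : windowSum lam (i + k) ≤ windowSum lam i + windowSum lam (i + 3) := by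
  interval_cases k <;> simp only [windowSum] <;> push_cast <;> ring_nf <;> omega

theorem stmt_0_general (s0 s1 s2 : ℕ)
    (s : ZMod 12 → ℕ)
    (hs : ∀ i : ZMod 12,
      s i = if i.val % 3 = 0 then s0 else if i.val % 3 = 1 then s1 else s2)
    (hlam : ∃ lam : ZMod 12 → ℕ,
      ∀ i : ZMod 12, s i = lam (i - 3) + lam (i - 2) + lam (i - 1) + lam i) :
    max s0 (max s1 s2) ≤ 2 * min s0 (min s1 s2) := by
  obtain ⟨lam, hlam⟩ := hlam
  have hW : ∀ i, s i = windowSum lam i := hlam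
  have periodic : ∀ i, s (i + 3) = s i := by
    have : ∀ i : ZMod 12, (i + 3).val % 3 = i.val % 3 := by decide
    intro i
    rw [hs, hs, this]
  have key : ∀ i (k : ℕ), k ≤ 3 → s (i + k) ≤ 2 * s i := by
    intro i k hk
    have := windowSum_add_le_add lam i hk
    rw [← hW, ← hW, ← hW, periodic] at this
    omega
  have v0 : s 0 = s0 := by rw [hs]; rfl
  have v1 : s 1 = s1 := by rw [hs]; rfl
  have v2 : s 2 = s2 := by rw [hs]; rfl
  have v3 : s 3 = s0 := by rw [hs]; rfl
  have v4 : s 4 = s1 := by rw [hs]; rfl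
  have h01 := key 0 1 (by norm_num)
  have h02 := key 0 2 (by norm_num)
  have h12 := key 1 1 (by norm_num)
  have h13 := key 1 2 (by norm_num)
  have h23 := key 2 1 (by norm_num)
  have h24 := key 2 2 (by norm_num)
  norm_num at h01 h02 h12 h13 h23 h24
  omega

/-- necessity of `max ≤ 2·min` for solvability of the cyclic
12-equation Diophantine system of the 3-user BIA problem. -/
theorem stmt_0 (N s0 s1 s2 : ℕ) (hN : 0 < N)
    (h0 : 0 < s0) (h1 : 0 < s1) (h2 : 0 < s2)
    (hsum : s0 + s1 + s2 = N)
    (s : ZMod 12 → ℕ)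
    (hs : ∀ i : ZMod 12,
      s i = if i.val % 3 = 0 then s0 else if i.val % 3 = 1 then s1 else s2)
    (hlam : ∃ lam : ZMod 12 → ℕ,
      ∀ i : ZMod 12, s i = lam (i - 3) + lam (i - 2) + lam (i - 1) + lam i) :
    max s0 (max s1 s2) ≤ 2 * min s0 (min s1 s2) :=
  stmt_0_general s0 s1 s2 s hs hlam
end

section
/- Let s₀, s₁, s₂ be positive integers, extended to ℤ/12 by s_i = s_{i mod 3}. If s₀ + s₁ + s₂ ≤ 4·min(s₀, s₁, s₂), then there exist nonnegative integers λ₀,...,λ₁₁ such that s_i = λ_{i-3} + λ_{i-2} + λ_{i-1} + λ_i for all i ∈ ℤ/12 (indices mod 12). -/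
/-!
Both the condition and the solvability of the system are invariant under rotating
`(s₀, s₁, s₂)`, since shifting the index of `λ` shifts the system. So we may assume `s₀` is the
minimum, and then the paper's explicit solution is nonnegative.
-/

def IsFourWindowSum {G M : Type*} [AddCommGroupWithOne G] [AddCommMonoid M] (s : G → M) : Prop :=
  ∃ lam : G → M, ∀ i, s i = lam (i - 3) + lam (i - 2) + lam (i - 1) + lam i

theorem IsFourWindowSum.comp_add_right {G M : Type*} [AddCommGroupWithOne G] [AddCommMonoid M]
    {s : G → M} (hs : IsFourWindowSum s) (k : G) : IsFourWindowSum fun i => s (i + k) := by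
  obtain ⟨lam, hlam⟩ := hs
  exact ⟨fun j => lam (j + k), fun i => by simp only [hlam, add_sub_right_comm]⟩

def threePeriodic (a b c : ℕ) (i : ZMod 12) : ℕ :=
  if i.val % 3 = 0 then a else if i.val % 3 = 1 then b else c

theorem threePeriodic_add_one (a b c : ℕ) (i : ZMod 12) :
    threePeriodic a b c (i + 1) = threePeriodic b c a i := by
  fin_cases i <;> rfl

theorem IsFourWindowSum.threePeriodic_rotate {a b c : ℕ}
    (h : IsFourWindowSum (threePeriodic a b c)) : IsFourWindowSum (threePeriodic b c a) := by
  simpa only [threePeriodic_add_one] using h.comp_add_right 1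

theorem isFourWindowSum_threePeriodic {a b c : ℕ} (hab : a ≤ b) (hac : a ≤ c)
    (h : b + c ≤ 3 * a) : IsFourWindowSum (threePeriodic a b c) := by
  let lam : Fin 12 → ℕ :=
    ![0, b - a, 2 * a - b, 0, b - a, c - a, 3 * a - b - c, b - a, c - a, 0, 2 * a - c, c - a]
  refine ⟨lam, ?_⟩
  -- `ZMod 12` is `Fin 12` by definition; in `Fin 12` the index arithmetic below simplifies.
  show ∀ i : Fin 12, threePeriodic a b c i = lam (i - 3) + lam (i - 2) + lam (i - 1) + lam i
  intro i
  fin_cases i <;> simp [threePeriodic, lam, ZMod.val] <;> omega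

theorem stmt_2_general (s0 s1 s2 : ℕ)
    (s : ZMod 12 → ℕ)
    (hs : ∀ i : ZMod 12,
      s i = if i.val % 3 = 0 then s0 else if i.val % 3 = 1 then s1 else s2)
    (hcond : s0 + s1 + s2 ≤ 4 * min s0 (min s1 s2)) :
    ∃ lam : ZMod 12 → ℕ,
      ∀ i : ZMod 12, s i = lam (i - 3) + lam (i - 2) + lam (i - 1) + lam i := by
  obtain rfl : s = threePeriodic s0 s1 s2 := funext hs
  obtain hmin | hmin | hmin :
      (s0 ≤ s1 ∧ s0 ≤ s2) ∨ (s1 ≤ s2 ∧ s1 ≤ s0) ∨ (s2 ≤ s0 ∧ s2 ≤ s1) := by omega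
  · exact isFourWindowSum_threePeriodic hmin.1 hmin.2 (by omega)
  · exact (isFourWindowSum_threePeriodic hmin.1 hmin.2 (by omega)).threePeriodic_rotate
      |>.threePeriodic_rotate
  · exact (isFourWindowSum_threePeriodic hmin.1 hmin.2 (by omega)).threePeriodic_rotate

/-- sufficiency of `s₀+s₁+s₂ ≤ 4·min` for solvability of the
cyclic 12-equation Diophantine system (Theorem 5 of the paper). -/
theorem stmt_2 (s0 s1 s2 : ℕ)
    (h0 : 0 < s0) (h1 : 0 < s1) (h2 : 0 < s2)
    (s : ZMod 12 → ℕ)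
    (hs : ∀ i : ZMod 12,
      s i = if i.val % 3 = 0 then s0 else if i.val % 3 = 1 then s1 else s2)
    (hcond : s0 + s1 + s2 ≤ 4 * min s0 (min s1 s2)) :
    ∃ lam : ZMod 12 → ℕ,
      ∀ i : ZMod 12, s i = lam (i - 3) + lam (i - 2) + lam (i - 1) + lam i :=
  stmt_2_general s0 s1 s2 s hs hcond
end

section
/- Fix an integer K ≥ 2. Let s₀,...,s_{K-1} be positive integers, extended to indices in ℤ/(K(K+1)) by s_i = s_j whenever i ≡ j (mod K). If there exist nonnegative integers λ_i, i ∈ ℤ/(K(K+1)), such that for every i, s_i = ∑_{j=i-K}^{i} λ_j (K+1 consecutive terms, indices mod K(K+1)), then ∑_{k=0}^{K-1} s_k ≤ (K+1)·min{s_k : 0 ≤ k ≤ K-1}. -/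
/-!
Let `Λ = ∑ λ`. The `K` windows of length `K + 1` ending at `0, K + 1, …, (K - 1)(K + 1)` tile
`ℤ/K(K+1)`, and `s (k (K + 1)) = s k`, so `∑ₖ s k = Λ`. The `K + 1` windows ending at
`k₀, k₀ + K, …, k₀ + K²` cover `ℤ/K(K+1)` and all have sum `s k₀`, so `Λ ≤ (K + 1) s k₀`;
take `k₀` a minimiser.
-/

open Finset

theorem ZMod.val_mod_eq_val_castHom {n K : ℕ} [NeZero n] (hK : K ∣ n) (x : ZMod n) :
    x.val % K = (ZMod.castHom hK (ZMod K) x).val := by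
  rw [ZMod.castHom_apply, ZMod.cast_eq_val, ZMod.val_natCast]

theorem apply_add_mul_eq_of_val_mod_eq {α : Type*} {n K : ℕ} [NeZero n] (hK : K ∣ n)
    {s : ZMod n → α} (hper : ∀ i j : ZMod n, i.val % K = j.val % K → s i = s j)
    (x c : ZMod n) : s (x + c * K) = s x := by
  apply hper
  simp only [ZMod.val_mod_eq_val_castHom hK, map_add, map_mul, map_natCast,
    ZMod.natCast_self, mul_zero, add_zero]

theorem sum_sum_range_mul_sub_eq_sum {M : Type*} [AddCommMonoid M] (m L : ℕ) [NeZero (m * L)]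
    (f : ZMod (m * L) → M) :
    ∑ k ∈ range m, ∑ j ∈ range L, f (k * L - j) = ∑ x, f x := by
  have hL : L ≠ 0 := right_ne_zero_of_mul (NeZero.ne (m * L))
  set g : ℕ × ℕ → ZMod (m * L) := fun p => p.1 * L - p.2
  have hinj : Set.InjOn g ↑(range m ×ˢ range L) := by
    rintro ⟨k, j⟩ hkj ⟨k', j'⟩ hkj' hg
    simp only [coe_product, coe_range, Set.mem_prod, Set.mem_Iio] at hkj hkj'
    have hj : j = j' := by
      have hgL := congrArg (ZMod.castHom (dvd_mul_left L m) (ZMod L)) hg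
      simp only [g, map_sub, map_mul, map_natCast, ZMod.natCast_self, mul_zero, zero_sub,
        neg_inj, ZMod.natCast_eq_natCast_iff'] at hgL
      rwa [Nat.mod_eq_of_lt hkj.2, Nat.mod_eq_of_lt hkj'.2] at hgL
    subst hj
    have hk : k * L ≡ k' * L [MOD m * L] := by
      simpa [g, ← ZMod.natCast_eq_natCast_iff] using hg
    have hkm := Nat.ModEq.mul_right_cancel' hL hk
    rw [Nat.ModEq, Nat.mod_eq_of_lt hkj.1, Nat.mod_eq_of_lt hkj'.1] at hkm
    rw [hkm]
  have himage : (range m ×ˢ range L).image g = univ := by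
    apply eq_univ_of_card
    rw [card_image_of_injOn hinj, card_product, card_range, card_range, ZMod.card]
  rw [← himage, sum_image hinj, sum_product]

theorem sum_le_sum_sum_range_add_mul_sub (d m : ℕ) [NeZero (d * m)] (f : ZMod (d * m) → ℕ)
    (a : ZMod (d * m)) :
    ∑ x, f x ≤ ∑ r ∈ range m, ∑ j ∈ range (d + 1), f (a + r * d - j) := by
  have hd : 0 < d := Nat.pos_of_ne_zero (left_ne_zero_of_mul (NeZero.ne (d * m)))
  set g : ℕ × ℕ → ZMod (d * m) := fun p => a + p.1 * d - p.2
  have himage : (range m ×ˢ range (d + 1)).image g = univ := by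
    refine eq_univ_of_forall fun x => mem_image.mpr ?_
    set u := (x - a + (d : ZMod (d * m))).val
    have hu : u < d * m := ZMod.val_lt _
    have hu_cast : (u : ZMod (d * m)) = x - a + d := ZMod.natCast_zmod_val _
    -- `x = a + (u / d) * d - (d - u % d)` with `u = val (x - a + d) < d * m`
    refine ⟨(u / d, d - u % d), ?_, ?_⟩
    · simp only [mem_product, mem_range]
      constructor
      · exact Nat.div_lt_of_lt_mul hu
      · omega
    · have hmod : u % d ≤ d := (Nat.mod_lt u hd).le
      have hdecomp :
          ((u / d : ℕ) : ZMod (d * m)) * d + ((u % d : ℕ) : ZMod (d * m)) = x - a + d := by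
        rw [← hu_cast, ← Nat.cast_mul, ← Nat.cast_add, Nat.div_add_mod']
      simp only [g, Nat.cast_sub hmod]
      linear_combination hdecomp
  rw [← himage]
  refine (sum_image_le_of_nonneg fun _ _ => Nat.zero_le _).trans ?_
  rw [sum_product]

/-- necessity of the K-user BIA-feasibility condition
(Theorem 9 of the paper, necessity direction). -/
theorem stmt_5 (K : ℕ) (hK : 2 ≤ K)
    (s : ZMod (K * (K + 1)) → ℕ)
    (hper : ∀ i j : ZMod (K * (K + 1)), i.val % K = j.val % K → s i = s j)
    (hlam : ∃ lam : ZMod (K * (K + 1)) → ℕ,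
      ∀ i : ZMod (K * (K + 1)),
        s i = ∑ j ∈ Finset.range (K + 1), lam (i - (j : ZMod (K * (K + 1))))) :
    ∑ k ∈ Finset.range K, s (k : ZMod (K * (K + 1))) ≤
      (K + 1) *
        (Finset.range K).inf' (Finset.nonempty_range_iff.mpr (by omega))
          (fun k => s (k : ZMod (K * (K + 1)))) := by
  obtain ⟨lam, hlam⟩ := hlam
  have : NeZero (K * (K + 1)) := ⟨Nat.mul_ne_zero (by omega) (by omega)⟩
  have hshift := apply_add_mul_eq_of_val_mod_eq (dvd_mul_right K (K + 1)) hper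
  obtain ⟨k₀, -, hk₀⟩ := exists_mem_eq_inf' (nonempty_range_iff.mpr (show K ≠ 0 by omega))
    (fun k => s (k : ZMod (K * (K + 1))))
  rw [hk₀]
  calc ∑ k ∈ range K, s k
      = ∑ k ∈ range K, ∑ j ∈ range (K + 1), lam (k * ((K + 1 : ℕ) : ZMod (K * (K + 1))) - j) := by
        refine sum_congr rfl fun k _ => ?_
        rw [← hlam, ← hshift k k]
        congr 1
        push_cast
        ring
    _ = ∑ x, lam x := sum_sum_range_mul_sub_eq_sum K (K + 1) lam
    _ ≤ ∑ r ∈ range (K + 1), ∑ j ∈ range (K + 1), lam (k₀ + r * K - j) :=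
        sum_le_sum_sum_range_add_mul_sub K (K + 1) lam k₀
    _ = (K + 1) * s k₀ := by
        simp only [← hlam, hshift, sum_const, card_range, smul_eq_mul]
end

section
/- Fix an integer K ≥ 2. Let s₀,...,s_{K-1} be positive integers with s₀ = min{s_k}, extended to ℤ/(K(K+1)) by s_i = s_{i mod K}. If ∑_{k=0}^{K-1} s_k ≤ (K+1)·s₀, then there exist nonnegative integers λ_i, i ∈ ℤ/(K(K+1)), such that s_i = ∑_{j=i-K}^{i} λ_j for every i (indices mod K(K+1)). -/
/-!
The intervals of length `K + 1` cover every residue mod `K` once and the residue of their right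
end point twice, so for a `K`-periodic `s` every window sum `∑_{j ≤ K} s (i - j)` equals
`s i + T` with `T = ∑_{k < K} s k`. Hence `λ x = s x - s 0` undershoots each `s i` by exactly
`(K + 1) s 0 - T ≥ 0`; every window of length `K + 1` contains exactly one index `≡ 1 mod (K + 1)`,
so adding this defect at those indices repairs all windows at once.
-/

open Finset

namespace ZMod

variable {M : Type*} [AddCommMonoid M]

theorem val_castHom {m n : ℕ} [NeZero n] (h : m ∣ n) (x : ZMod n) :
    (castHom h (ZMod m) x).val = x.val % m := by
  rw [castHom_apply, ← natCast_val, val_natCast]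

theorem sum_range_natCast (m : ℕ) [NeZero m] (f : ZMod m → M) :
    ∑ j ∈ range m, f j = ∑ y, f y :=
  sum_nbij' (↑) val (fun _ _ => mem_univ _) (fun y _ => mem_range.2 y.val_lt)
    (fun _ hj => val_cast_of_lt (mem_range.1 hj)) (fun y _ => natCast_zmod_val y) fun _ _ => rfl

theorem sum_range_castHom_sub {m n : ℕ} [NeZero m] (h : m ∣ n) (f : ZMod m → M) (c : ZMod n) :
    ∑ j ∈ range m, f (castHom h (ZMod m) (c - j)) = ∑ y, f y := by
  simp only [map_sub, map_natCast]
  rw [sum_range_natCast m fun y => f (castHom h (ZMod m) c - y)]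
  exact Fintype.sum_equiv (Equiv.subLeft _) _ _ fun _ => rfl

end ZMod

section Periodic

variable {n K : ℕ} [NeZero n] {M : Type*} {s : ZMod n → M}

theorem factorsThrough_castHom_of_val_mod (hK : K ∣ n)
    (hper : ∀ i j : ZMod n, i.val % K = j.val % K → s i = s j) :
    Function.FactorsThrough s (ZMod.castHom hK (ZMod K)) := fun x y h =>
  hper x y (by rw [← ZMod.val_castHom hK, ← ZMod.val_castHom hK, h])

theorem sum_range_succ_sub_of_val_mod [AddCommMonoid M] [NeZero K] (hK : K ∣ n)
    (hper : ∀ i j : ZMod n, i.val % K = j.val % K → s i = s j) (i : ZMod n) :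
    ∑ j ∈ range (K + 1), s (i - j) = s i + ∑ k ∈ range K, s k := by
  set π := ZMod.castHom hK (ZMod K)
  have hfac := factorsThrough_castHom_of_val_mod hK hper
  set t := Function.extend π s 0
  have hst : ∀ x, s x = t (π x) := fun x => (hfac.extend_apply 0 x).symm
  have hwin : ∑ j ∈ range K, s (i - j) = ∑ y, t y := by
    simp only [hst]
    exact ZMod.sum_range_castHom_sub hK t i
  have hT : ∑ k ∈ range K, s k = ∑ y, t y := by
    simp only [hst, map_natCast]
    exact ZMod.sum_range_natCast K t
  have hlast : s (i - K) = s i := hfac (by rw [map_sub, map_natCast, ZMod.natCast_self, sub_zero])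
  rw [sum_range_succ, hwin, hT, hlast, add_comm]

theorem apply_zero_le_of_val_mod [Preorder M] [NeZero K] (hK : K ∣ n)
    (hper : ∀ i j : ZMod n, i.val % K = j.val % K → s i = s j)
    (hmin : ∀ k : ℕ, k < K → s 0 ≤ s k) (x : ZMod n) : s 0 ≤ s x := by
  have hx : s (x.val % K : ℕ) = s x :=
    factorsThrough_castHom_of_val_mod hK hper (by simp)
  exact hx ▸ hmin _ (Nat.mod_lt _ (Nat.pos_of_neZero K))

end Periodic

theorem exists_eq_sum_range_succ_sub {n K : ℕ} (hK : K + 1 ∣ n) (s : ZMod n → ℕ) (b T : ℕ)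
    (hb : ∀ x, b ≤ s x) (hwin : ∀ i, ∑ j ∈ range (K + 1), s (i - j) = s i + T)
    (hT : T ≤ (K + 1) * b) :
    ∃ lam : ZMod n → ℕ, ∀ i, s i = ∑ j ∈ range (K + 1), lam (i - j) := by
  set ρ := ZMod.castHom hK (ZMod (K + 1))
  set D := (K + 1) * b - T
  refine ⟨fun x => (s x - b) + if ρ x = 1 then D else 0, fun i => ?_⟩
  have hind : ∑ j ∈ range (K + 1), (if ρ (i - j) = 1 then D else 0) = D := by
    rw [ZMod.sum_range_castHom_sub hK (fun y => if y = 1 then D else 0) i]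
    simp
  have hexcess : ∑ j ∈ range (K + 1), (s (i - j) - b) + (K + 1) * b = s i + T := by
    have h := sum_congr rfl fun j (_ : j ∈ range (K + 1)) => Nat.sub_add_cancel (hb (i - j))
    rwa [sum_add_distrib, sum_const, card_range, smul_eq_mul, hwin] at h
  rw [sum_add_distrib, hind]
  omega

theorem stmt_6_general (K : ℕ) (hK : 2 ≤ K)
    (s : ZMod (K * (K + 1)) → ℕ)
    (hper : ∀ i j : ZMod (K * (K + 1)), i.val % K = j.val % K → s i = s j)
    (hmin : ∀ k : ℕ, k < K → s 0 ≤ s (k : ZMod (K * (K + 1))))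
    (hcond : ∑ k ∈ Finset.range K, s (k : ZMod (K * (K + 1))) ≤ (K + 1) * s 0) :
    ∃ lam : ZMod (K * (K + 1)) → ℕ,
      ∀ i : ZMod (K * (K + 1)),
        s i = ∑ j ∈ Finset.range (K + 1), lam (i - (j : ZMod (K * (K + 1)))) := by
  have : NeZero K := ⟨by omega⟩
  have hKn : K ∣ K * (K + 1) := dvd_mul_right K (K + 1)
  exact exists_eq_sum_range_succ_sub (dvd_mul_left (K + 1) K) s (s 0) _
    (apply_zero_le_of_val_mod hKn hper hmin) (sum_range_succ_sub_of_val_mod hKn hper) hcond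

/-- sufficiency of the K-user BIA-feasibility condition
(Theorem 9 of the paper, sufficiency direction). -/
theorem stmt_6 (K : ℕ) (hK : 2 ≤ K)
    (s : ZMod (K * (K + 1)) → ℕ)
    (hpos : ∀ i, 0 < s i)
    (hper : ∀ i j : ZMod (K * (K + 1)), i.val % K = j.val % K → s i = s j)
    (hmin : ∀ k : ℕ, k < K → s 0 ≤ s (k : ZMod (K * (K + 1))))
    (hcond : ∑ k ∈ Finset.range K, s (k : ZMod (K * (K + 1))) ≤ (K + 1) * s 0) :
    ∃ lam : ZMod (K * (K + 1)) → ℕ,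
      ∀ i : ZMod (K * (K + 1)),
        s i = ∑ j ∈ Finset.range (K + 1), lam (i - (j : ZMod (K * (K + 1)))) :=
  stmt_6_general K hK s hper hmin hcond
end

section
/- Let s₀, s₁, s₂ be positive integers with s₀ ≤ s₁ ≤ s₂ and s₁ + s₂ ≤ 3s₀. Setting x = s₁ - s₀ and y = 2s₀ - s₁, the twelve values λ = (0, x, y, 0, s₁-s₀, s₂-s₁+x, 3s₀-s₁-s₂, s₁-s₀, s₂-s₁+x, 0, 2s₀-s₂, s₂-s₀) are all nonnegative integers and satisfy s_i = λ_{i-3} + λ_{i-2} + λ_{i-1} + λ_i for every i ∈ ℤ/12, where s is extended by s_i = s_{i mod 3} and indices on λ are mod 12. -/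
theorem stmt_17_general (s0 s1 s2 : ℤ)
    (h01 : s0 ≤ s1) (h12 : s1 ≤ s2) (hcond : s1 + s2 ≤ 3 * s0) :
    let x : ℤ := s1 - s0
    let y : ℤ := s0 - x
    let lam : ZMod 12 → ℤ := fun i =>
      ![0, x, y, 0, s1 - s0, s2 - s1 + x, 3 * s0 - s1 - s2, s1 - s0,
        s2 - s1 + x, 0, 2 * s0 - s2, s2 - s0] ⟨i.val, ZMod.val_lt i⟩
    let s : ZMod 12 → ℤ := fun i =>
      if i.val % 3 = 0 then s0 else if i.val % 3 = 1 then s1 else s2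
    (∀ i, 0 ≤ lam i) ∧
      ∀ i : ZMod 12, s i = lam (i - 3) + lam (i - 2) + lam (i - 1) + lam i := by
  intro x y lam s
  have hs1 : s1 ≤ 2 * s0 := by linarith
  have hs2 : s2 ≤ 2 * s0 := by linarith
  -- `ZMod 12` is `Fin 12` by definition, so `dsimp!` evaluates `i.val` and the shifts `i - k`.
  constructor
  · intro i
    fin_cases i <;> dsimp! [lam, x, y] <;> linarith
  · intro i
    fin_cases i <;> dsimp! [lam, s, x, y] <;> ring

/-- the explicit witness of Theorem 5 solves the cyclic
12-equation system and has nonnegative entries. -/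
theorem stmt_17 (s0 s1 s2 : ℤ)
    (h0 : 0 < s0) (h1 : 0 < s1) (h2 : 0 < s2)
    (h01 : s0 ≤ s1) (h12 : s1 ≤ s2) (hcond : s1 + s2 ≤ 3 * s0) :
    let x : ℤ := s1 - s0
    let y : ℤ := s0 - x
    let lam : ZMod 12 → ℤ := fun i =>
      ![0, x, y, 0, s1 - s0, s2 - s1 + x, 3 * s0 - s1 - s2, s1 - s0,
        s2 - s1 + x, 0, 2 * s0 - s2, s2 - s0] ⟨i.val, ZMod.val_lt i⟩
    let s : ZMod 12 → ℤ := fun i =>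
      if i.val % 3 = 0 then s0 else if i.val % 3 = 1 then s1 else s2
    (∀ i, 0 ≤ lam i) ∧
      ∀ i : ZMod 12, s i = lam (i - 3) + lam (i - 2) + lam (i - 1) + lam i :=
  stmt_17_general s0 s1 s2 h01 h12 hcond
end

section
/- Let N ≥ 4 and K ≥ 2, and consider the 2-user problem with a reference ball fixed at position 0 of ℤ/N. The number of functions g : {2,...,K} → ℤ/N such that all K positions 0, g(2), ..., g(K) lie in a common arc of at most ⌊N/3⌋ consecutive positions (the infeasible events) equals 1 + ∑_{n=2}^{⌊N/3⌋} ( 2[n^{K-1} - (n-1)^{K-1}] + (n-2)[n^{K-1} - 2(n-1)^{K-1} + (n-2)^{K-1}] ). -/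
lemma rhs_telescope (Θ : ℕ) : ∀ m : ℕ, 1 ≤ m →
    (1 + ∑ n ∈ Finset.Icc 2 m,
        (2 * ((n : ℤ) ^ Θ - ((n : ℤ) - 1) ^ Θ) +
          ((n : ℤ) - 2) *
            ((n : ℤ) ^ Θ - 2 * ((n : ℤ) - 1) ^ Θ + ((n : ℤ) - 2) ^ Θ))) =
      (m : ℤ) ^ (Θ + 1) - ((m : ℤ) - 1) ^ (Θ + 1) := by
  intro m
  induction m with
  | zero => omega
  | succ m ih =>
    intro _
    rcases Nat.eq_zero_or_pos m with hm | hm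
    · subst hm; simp
    · rw [Finset.sum_Icc_succ_top (by omega), ← add_assoc, ih hm]
      push_cast
      rw [pow_succ, pow_succ, pow_succ, pow_succ]
      ring

lemma card_A (Θ N m : ℕ) (hm : 1 ≤ m) (h3m : 3 * m ≤ N) :
    haveI : NeZero N := ⟨by omega⟩
    haveI : NeZero m := ⟨by omega⟩
    Nat.card {g : Fin Θ → ZMod N //
        ∃ a : ZMod N, ((0 : ZMod N) - a).val < m ∧ ∀ i, (g i - a).val < m}
      = Nat.card {z : Option (Fin Θ) → Fin m // ∃ j, z j = 0} := by
  haveI : NeZero N := ⟨by omega⟩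
  haveI : NeZero m := ⟨by omega⟩
  symm
  apply Nat.card_eq_of_bijective
    (f := fun z => ⟨fun i => ((z.1 (some i) : ℕ) : ZMod N) - ((z.1 none : ℕ) : ZMod N), by
      refine ⟨-(((z.1 none : ℕ) : ZMod N)), ?_, ?_⟩
      · rw [zero_sub, neg_neg, ZMod.val_cast_of_lt (by have := (z.1 none).2; omega)]
        exact (z.1 none).2
      · intro i
        simp only [sub_neg_eq_add, sub_add_cancel]
        rw [ZMod.val_cast_of_lt (by have := (z.1 (some i)).2; omega)]
        exact (z.1 (some i)).2⟩)
  constructor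
  · -- injective
    rintro ⟨z, j0, hj0⟩ ⟨z', j0', hj0'⟩ h
    simp only [Subtype.mk.injEq] at h ⊢
    have hfun := congrFun h
    have key : ∀ j : Option (Fin Θ), (z j : ℕ) + (z' none : ℕ) = (z' j : ℕ) + (z none : ℕ) := by
      intro j
      match j with
      | none => exact Nat.add_comm _ _
      | some i =>
        have hi := hfun i
        have : (((z (some i) : ℕ) + (z' none : ℕ) : ℕ) : ZMod N)
            = (((z' (some i) : ℕ) + (z none : ℕ) : ℕ) : ZMod N) := by
          push_cast
          linear_combination hi
        have e := congrArg ZMod.val this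
        rwa [ZMod.val_cast_of_lt (by have := (z (some i)).2; have := (z' none).2; omega),
          ZMod.val_cast_of_lt (by have := (z' (some i)).2; have := (z none).2; omega)] at e
    have k1 := key j0
    have k2 := key j0'
    have hz0 : (z j0 : ℕ) = 0 := by rw [hj0]; simp
    have hz0' : (z' j0' : ℕ) = 0 := by rw [hj0']; simp
    rw [hz0] at k1
    rw [hz0'] at k2
    have hnone : (z none : ℕ) = (z' none : ℕ) := by omega
    funext j
    have := key j
    rw [hnone] at this
    exact Fin.ext (by omega)
  · -- surjective
    rintro ⟨g, a, ha, hg⟩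
    set w : Option (Fin Θ) → ℕ := fun j => Option.elim j ((0 - a).val) (fun i => (g i - a).val)
      with hw_def
    have hw : ∀ j, w j < m := by
      rintro (_ | i)
      · simpa [hw_def] using ha
      · simpa [hw_def] using hg i
    set μ := Finset.univ.inf' Finset.univ_nonempty w with hμ
    have hμle : ∀ j, μ ≤ w j := fun j => Finset.inf'_le w (Finset.mem_univ j)
    refine ⟨⟨fun j => ⟨w j - μ, by have := hw j; omega⟩, ?_⟩, ?_⟩
    · obtain ⟨j0, -, hj0⟩ := Finset.exists_mem_eq_inf' Finset.univ_nonempty w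
      exact ⟨j0, Fin.ext (by simp [← hj0, hμ])⟩
    · apply Subtype.ext
      funext i
      simp only
      rw [Nat.cast_sub (hμle (some i)), Nat.cast_sub (hμle none)]
      have e1 : ((w (some i) : ℕ) : ZMod N) = g i - a := by
        simp [hw_def, ZMod.natCast_val, ZMod.cast_id]
      have e2 : ((w none : ℕ) : ZMod N) = 0 - a := by
        simp [hw_def, ZMod.natCast_val, ZMod.cast_id]
      rw [e1, e2]
      ring

lemma card_B (Θ m : ℕ) (hm : 1 ≤ m) :
    haveI : NeZero m := ⟨by omega⟩
    Nat.card {z : Option (Fin Θ) → Fin m // ∃ j, z j = 0} = m ^ (Θ + 1) - (m - 1) ^ (Θ + 1) := by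
  haveI : NeZero m := ⟨by omega⟩
  rw [Nat.card_eq_fintype_card]
  have h1 : Fintype.card {z : Option (Fin Θ) → Fin m // ∃ j, z j = 0}
      = Fintype.card {z : Option (Fin Θ) → Fin m // ¬ ∀ j, z j ≠ 0} := by
    apply Fintype.card_congr
    apply Equiv.subtypeEquivRight
    intro z
    push_neg
    rfl
  rw [h1, Fintype.card_subtype_compl]
  have h2 : Fintype.card {z : Option (Fin Θ) → Fin m // ∀ j, z j ≠ 0}
      = (m - 1) ^ (Θ + 1) := by
    rw [Fintype.card_congr (Equiv.subtypePiEquivPi (p := fun _ (x : Fin m) => x ≠ 0))]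
    rw [Fintype.card_pi]
    have : Fintype.card {x : Fin m // x ≠ 0} = m - 1 := by
      rw [Fintype.card_subtype_compl, Fintype.card_subtype_eq, Fintype.card_fin]
    simp [this]
  rw [h2]
  congr 1
  simp [Fintype.card_fun]

/-- count of ball placements in which all occupied positions
(including the reference at 0) lie in a common arc of length at most ⌊N/3⌋,
i.e. the events containing no BIA-feasible 2-user pair. -/
theorem stmt_19 (N K : ℕ) (hN : 4 ≤ N) (hK : 2 ≤ K) :
    (Nat.card {g : Fin (K - 1) → ZMod N //
        ∃ n : ℕ, 1 ≤ n ∧ n ≤ N / 3 ∧ ∃ a : ZMod N,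
          ((0 : ZMod N) - a).val < n ∧ ∀ i, (g i - a).val < n} : ℤ) =
      1 + ∑ n ∈ Finset.Icc 2 (N / 3),
        (2 * ((n : ℤ) ^ (K - 1) - ((n : ℤ) - 1) ^ (K - 1)) +
          ((n : ℤ) - 2) *
            ((n : ℤ) ^ (K - 1) - 2 * ((n : ℤ) - 1) ^ (K - 1) +
              ((n : ℤ) - 2) ^ (K - 1))) := by
  set m := N / 3 with hm_def
  have hm : 1 ≤ m := by omega
  have h3m : 3 * m ≤ N := by omega
  have hKm : K - 1 + 1 = K := by omega
  rw [rhs_telescope (K - 1) m hm, hKm]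
  have hiff : ∀ g : Fin (K - 1) → ZMod N,
      (∃ n : ℕ, 1 ≤ n ∧ n ≤ m ∧ ∃ a : ZMod N,
          ((0 : ZMod N) - a).val < n ∧ ∀ i, (g i - a).val < n) ↔
      (∃ a : ZMod N, ((0 : ZMod N) - a).val < m ∧ ∀ i, (g i - a).val < m) := by
    intro g
    constructor
    · rintro ⟨n, -, hn2, a, ha, hg⟩
      exact ⟨a, lt_of_lt_of_le ha hn2, fun i => lt_of_lt_of_le (hg i) hn2⟩
    · rintro ⟨a, ha, hg⟩
      exact ⟨m, hm, le_refl m, a, ha, hg⟩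
  rw [Nat.card_congr (Equiv.subtypeEquivRight hiff), card_A (K - 1) N m hm h3m,
    card_B (K - 1) m hm, hKm]
  have hle : (m - 1) ^ K ≤ m ^ K := Nat.pow_le_pow_left (Nat.sub_le m 1) K
  rw [Nat.cast_sub hle, Nat.cast_pow, Nat.cast_pow, Nat.cast_sub hm, Nat.cast_one]
end
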